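/- Let X be a Čech-complete space. If C_p(X) is an Ascoli space, then X is scattered. -/

import Mathlib

/-- `C_p(X)`: the continuous real-valued functions on `X`, considered with the topology
of pointwise convergence (as a subspace of the product `ℝ^X`). -/
def Cp (X : Type*) [TopologicalSpace X] : Type _ := C(X, ℝ)

/-- The topology of pointwise convergence on `Cp X`. -/
instance Cp.instTopologicalSpace (X : Type*) [TopologicalSpace X] :
    TopologicalSpace (Cp X) :=
  TopologicalSpace.induced (fun f : C(X, ℝ) => (f : X → ℝ)) Pi.topologicalSpace

/-- A set `K` of continuous real-valued functions on `Z` is evenly continuous if for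
every `x ∈ Z`, `f ∈ K` and open `V ∋ f x` there are an open `U ∋ x` and an open
`W ∋ f x` such that every `g ∈ K` with `g x ∈ W` maps `U` into `V`. -/
def EvenlyContinuousOn (Z : Type*) [TopologicalSpace Z] (K : Set C(Z, ℝ)) : Prop :=
  ∀ x : Z, ∀ f ∈ K, ∀ V : Set ℝ, IsOpen V → f x ∈ V →
    ∃ U : Set Z, IsOpen U ∧ x ∈ U ∧
      ∃ W : Set ℝ, IsOpen W ∧ f x ∈ W ∧
        ∀ g ∈ K, g x ∈ W → ∀ y ∈ U, g y ∈ V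

/-- A space `Z` is Ascoli if every compact subset of `C_k(Z)` (continuous real-valued
functions with the compact-open topology) is evenly continuous. -/
def AscoliSpace (Z : Type*) [TopologicalSpace Z] : Prop :=
  ∀ K : Set C(Z, ℝ), IsCompact K → EvenlyContinuousOn Z K

/-- A space `Z` is κ-Fréchet–Urysohn if for every open `A ⊆ Z` and every `z` in the
closure of `A` there is a sequence in `A` converging to `z`. -/
def KappaFrechetUrysohn (Z : Type*) [TopologicalSpace Z] : Prop :=
  ∀ A : Set Z, IsOpen A → ∀ z ∈ closure A,
    ∃ u : ℕ → Z, (∀ n, u n ∈ A) ∧ Filter.Tendsto u Filter.atTop (nhds z)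

/-- A space is Čech-complete if it is Tychonoff and is a countable intersection of open
sets in some (equivalently, any) compactification. -/
def CechComplete (X : Type u) [TopologicalSpace X] : Prop :=
  CompletelyRegularSpace X ∧ T2Space X ∧
    ∃ (K : Type u) (tK : TopologicalSpace K) (e : X → K),
      @CompactSpace K tK ∧ @T2Space K tK ∧
      @Topology.IsEmbedding X K _ tK e ∧ @Dense K tK (Set.range e) ∧
      ∃ G : ℕ → Set K, (∀ n, @IsOpen K tK (G n)) ∧ (⋂ n, G n) = Set.range e

/-- A space is scattered if every nonempty subset has a point isolated in it. -/
def Scattered (X : Type*) [TopologicalSpace X] : Prop :=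
  ∀ A : Set X, A.Nonempty → ∃ a ∈ A, ∃ U : Set X, IsOpen U ∧ U ∩ A = {a}

/-!
If `X` is not scattered, some nonempty `S ⊆ X` has no isolated points. Inside a compactification
`K` in which `X = ⋂ n, G n`, repeatedly splitting `S` gives a binary tree of closed sets whose
`n`-th level lies in `G n`. A closed set `C` that is minimal among those meeting every node of the
tree then lies in `X`, and the traces of the nodes on `C` form a countable π-network of `C` made of
infinite sets. Choose pairwise disjoint finite sets `A k ⊆ C`, with `A k` meeting the first `k`
members of the π-network. By the Baire category theorem in `C`, whenever open sets `V k` contain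
`A k` for infinitely many `k`, some point lies in infinitely many `V k`. Hence the functions
`f ↦ max 0 (min_{A k} f - k)` tend to `0` in `C_k(C_p(X))`, but they are not evenly continuous at
`0`: a basic neighbourhood of `0` in `C_p(X)` only controls a finite set, which misses some `A k`.
-/

open Set Filter Topology Function

section HittingSet

variable {K ι : Type*} [TopologicalSpace K]

def IsClosedHittingSet (F : ι → Set K) (D : Set K) : Prop :=
  IsClosed D ∧ ∀ i, (D ∩ F i).Nonempty

variable {F : ι → Set K} {C : Set K}

theorem exists_minimal_isClosedHittingSet [CompactSpace K] (hF : ∀ i, IsClosed (F i))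
    (hne : ∀ i, (F i).Nonempty) : ∃ C, Minimal (IsClosedHittingSet F) C := by
  suffices hchain : ∀ c ⊆ {D | IsClosedHittingSet F D}, IsChain (· ⊆ ·) c → c.Nonempty →
      ∃ lb ∈ {D | IsClosedHittingSet F D}, ∀ D ∈ c, lb ⊆ D by
    obtain ⟨C, -, hC⟩ := zorn_superset_nonempty _ hchain univ
      ⟨isClosed_univ, fun i => by simpa using hne i⟩
    exact ⟨C, hC⟩
  intro c hcS hc ⟨D₀, hD₀⟩
  have : Nonempty c := ⟨⟨D₀, hD₀⟩⟩
  refine ⟨⋂₀ c, ⟨isClosed_sInter fun D hD => (hcS hD).1, fun i => ?_⟩,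
    fun D hD => sInter_subset_of_mem hD⟩
  rw [sInter_eq_iInter, iInter_inter]
  exact IsCompact.nonempty_iInter_of_directed_nonempty_isCompact_isClosed _
    (fun D D' => (hc.total D.2 D'.2).elim (fun h => ⟨D, subset_rfl, inter_subset_inter_left _ h⟩)
      fun h => ⟨D', inter_subset_inter_left _ h, subset_rfl⟩)
    (fun D => (hcS D.2).2 i) (fun D => ((hcS D.2).1.inter (hF i)).isCompact)
    (fun D => (hcS D.2).1.inter (hF i))

theorem Minimal.exists_inter_subset_of_isOpen (hC : Minimal (IsClosedHittingSet F) C)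
    {U : Set K} (hU : IsOpen U) (hUC : (U ∩ C).Nonempty) : ∃ i, C ∩ F i ⊆ U := by
  by_contra! h
  have hdiff : IsClosedHittingSet F (C \ U) :=
    ⟨hC.prop.1.sdiff hU, fun i => by
      obtain ⟨x, hx, hxU⟩ := not_subset.1 (h i)
      exact ⟨x, ⟨hx.1, hxU⟩, hx.2⟩⟩
  obtain ⟨x, hxU, hxC⟩ := hUC
  exact (hC.eq_of_subset hdiff sdiff_subset ▸ hxC).2 hxU

theorem Minimal.subset_of_isClosed (hC : Minimal (IsClosedHittingSet F) C) {E : Set K}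
    (hE : IsClosed E) (hFE : ∀ i, ∃ j, F j ⊆ F i ∩ E) : C ⊆ E := by
  have hCE : IsClosedHittingSet F (C ∩ E) := ⟨hC.prop.1.inter hE, fun i => by
    obtain ⟨j, hj⟩ := hFE i
    obtain ⟨x, hxC, hxj⟩ := hC.prop.2 j
    exact ⟨x, ⟨hxC, (hj hxj).2⟩, (hj hxj).1⟩⟩
  exact (hC.eq_of_subset hCE inter_subset_left).symm ▸ inter_subset_right

end HittingSet

section BinaryTree

theorem exists_binaryTree {α : Type*} {p : α → Prop} {R : ℕ → α → α → α → Prop} {a₀ : α}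
    (h₀ : p a₀) (hsplit : ∀ n a, p a → ∃ b c, p b ∧ p c ∧ R n a b c) :
    ∃ t : List Bool → α, (∀ σ, p (t σ)) ∧
      ∀ σ, R σ.length (t σ) (t (false :: σ)) (t (true :: σ)) := by
  choose! f g hf hg hR using hsplit
  let t : List Bool → α := fun σ => σ.rec a₀ fun b τ x => bif b then g τ.length x else f τ.length x
  have ht : ∀ σ, p (t σ) := fun σ => σ.recOn h₀ fun b τ ih => b.casesOn (hf _ _ ih) (hg _ _ ih)
  exact ⟨t, ht, fun σ => hR _ _ (ht σ)⟩

variable {K : Type*} {F : List Bool → Set K}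

def treeLevel (F : List Bool → Set K) (m : ℕ) : Set K :=
  ⋃ σ ∈ {σ : List Bool | σ.length = m}, F σ

theorem isClosed_treeLevel [TopologicalSpace K] (hF : ∀ σ, IsClosed (F σ)) (m : ℕ) :
    IsClosed (treeLevel F m) :=
  (List.finite_length_eq Bool m).isClosed_biUnion fun σ _ => hF σ

theorem subset_treeLevel_length (σ : List Bool) : F σ ⊆ treeLevel F σ.length :=
  subset_biUnion_of_mem (u := F) rfl

theorem treeLevel_succ_subset {G : ℕ → Set K} (hG : ∀ b σ, F (b :: σ) ⊆ G σ.length) (m : ℕ) :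
    treeLevel F (m + 1) ⊆ G m := by
  refine iUnion₂_subset fun σ hσ => ?_
  obtain ⟨b, τ, rfl⟩ := List.exists_cons_of_length_eq_add_one hσ
  simpa [show τ.length = m by simpa using hσ] using hG b τ

theorem antitone_treeLevel (hcons : ∀ b σ, F (b :: σ) ⊆ F σ) : Antitone (treeLevel F) :=
  antitone_nat_of_succ_le <|
    treeLevel_succ_subset fun b σ => (hcons b σ).trans (subset_treeLevel_length σ)

theorem antitone_replicate_append (hcons : ∀ b σ, F (b :: σ) ⊆ F σ) (σ : List Bool) :
    Antitone fun m => F (List.replicate m false ++ σ) :=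
  antitone_nat_of_succ_le fun _ => hcons false _

theorem Minimal.subset_treeLevel [TopologicalSpace K] {C : Set K}
    (hC : Minimal (IsClosedHittingSet F) C) (hF : ∀ σ, IsClosed (F σ))
    (hcons : ∀ b σ, F (b :: σ) ⊆ F σ) (m : ℕ) : C ⊆ treeLevel F m := by
  refine hC.subset_of_isClosed (isClosed_treeLevel hF m) fun σ => ⟨List.replicate m false ++ σ,
    subset_inter (antitone_replicate_append hcons σ (Nat.zero_le m)) ?_⟩
  refine (subset_treeLevel_length _).trans (antitone_treeLevel hcons ?_)
  simp

theorem infinite_inter_of_forall_inter_nonempty (hcons : ∀ b σ, F (b :: σ) ⊆ F σ)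
    (hdisj : ∀ σ, Disjoint (F (false :: σ)) (F (true :: σ)))
    {D : Set K} (hD : ∀ τ, (D ∩ F τ).Nonempty) (σ : List Bool) : (D ∩ F σ).Infinite := by
  set c : ℕ → List Bool := fun m => List.replicate m false ++ σ
  choose x hxD hxF using fun m => hD (true :: c m)
  refine infinite_of_injective_forall_mem (f := x) (.of_lt_imp_ne fun m m' hm => ?_)
    fun m => ⟨hxD m, antitone_replicate_append hcons σ (Nat.zero_le m) (hcons true _ (hxF m))⟩
  -- `c m'` descends from `false :: c m`, the sibling of `true :: c m`
  have h' : x m' ∈ F (false :: c m) :=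
    antitone_replicate_append hcons σ hm (hcons true _ (hxF m'))
  exact ((hdisj (c m)).ne_of_mem h' (hxF m)).symm

end BinaryTree

section Preperfect

theorem Preperfect.image {X Y : Type*} [TopologicalSpace X] [TopologicalSpace Y] {S : Set X}
    (hS : Preperfect S) {e : X → Y} (he : Continuous e) (hinj : Injective e) :
    Preperfect (e '' S) := by
  rintro _ ⟨x, hx, rfl⟩
  simpa using (hS x hx).map he.continuousAt hinj

theorem exists_preperfect_of_not_scattered {X : Type*} [TopologicalSpace X] (h : ¬ Scattered X) :
    ∃ S : Set X, S.Nonempty ∧ Preperfect S := by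
  simp only [Scattered, not_forall, not_exists, not_and] at h
  obtain ⟨S, hSne, hS⟩ := h
  refine ⟨S, hSne, preperfect_iff_nhds.2 fun x hx U hU => ?_⟩
  obtain ⟨V, hVU, hV, hxV⟩ := mem_nhds_iff.1 hU
  by_contra! hcon
  exact hS x hx V hV (eq_singleton_iff_unique_mem.2
    ⟨⟨hxV, hx⟩, fun y hy => hcon y ⟨hVU hy.1, hy.2⟩⟩)

variable {K : Type*} [TopologicalSpace K] [T2Space K] [RegularSpace K] {S : Set K}

theorem Preperfect.exists_disjoint_closure_subset (hS : Preperfect S) {U : Set K} (hU : IsOpen U)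
    (hUS : (U ∩ S).Nonempty) :
    ∃ V₁ V₂ : Set K, (IsOpen V₁ ∧ (V₁ ∩ S).Nonempty) ∧ (IsOpen V₂ ∧ (V₂ ∩ S).Nonempty) ∧
      closure V₁ ⊆ U ∧ closure V₂ ⊆ U ∧ Disjoint (closure V₁) (closure V₂) := by
  obtain ⟨x, hxU, hxS⟩ := hUS
  obtain ⟨y, ⟨hyU, hyS⟩, hyx⟩ := preperfect_iff_nhds.1 hS x hxS U (hU.mem_nhds hxU)
  obtain ⟨W₁, W₂, hW₁, hW₂, hxW, hyW, hW⟩ := t2_separation hyx.symm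
  obtain ⟨V₁, ⟨hxV, hV₁⟩, hV₁W⟩ :=
    (hasBasis_opens_closure x).mem_iff.1 (inter_mem (hW₁.mem_nhds hxW) (hU.mem_nhds hxU))
  obtain ⟨V₂, ⟨hyV, hV₂⟩, hV₂W⟩ :=
    (hasBasis_opens_closure y).mem_iff.1 (inter_mem (hW₂.mem_nhds hyW) (hU.mem_nhds hyU))
  exact ⟨V₁, V₂, ⟨hV₁, x, hxV, hxS⟩, ⟨hV₂, y, hyV, hyS⟩, hV₁W.trans inter_subset_right,
    hV₂W.trans inter_subset_right,
    hW.mono (hV₁W.trans inter_subset_left) (hV₂W.trans inter_subset_left)⟩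

theorem Preperfect.exists_isClosed_binaryTree (hS : Preperfect S) (hSne : S.Nonempty)
    {G : ℕ → Set K} (hG : ∀ n, IsOpen (G n)) (hSG : ∀ n, S ⊆ G n) :
    ∃ F : List Bool → Set K, (∀ σ, IsClosed (F σ)) ∧ (∀ σ, (F σ).Nonempty) ∧
      (∀ b σ, F (b :: σ) ⊆ F σ ∩ G σ.length) ∧ ∀ σ, Disjoint (F (false :: σ)) (F (true :: σ)) := by
  obtain ⟨t, ht, hR⟩ := exists_binaryTree (p := fun U => IsOpen U ∧ (U ∩ S).Nonempty)
    (R := fun n U V₁ V₂ => closure V₁ ⊆ U ∩ G n ∧ closure V₂ ⊆ U ∩ G n ∧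
      Disjoint (closure V₁) (closure V₂))
    (a₀ := univ) ⟨isOpen_univ, by simpa using hSne⟩ fun n U ⟨hU, x, hxU, hxS⟩ =>
      hS.exists_disjoint_closure_subset (hU.inter (hG n)) ⟨x, ⟨hxU, hSG n hxS⟩, hxS⟩
  refine ⟨fun σ => closure (t σ), fun σ => isClosed_closure,
    fun σ => (ht σ).2.mono (inter_subset_left.trans subset_closure), ?_, fun σ => (hR σ).2.2⟩
  rintro (_ | _) σ
  · exact (hR σ).1.trans (inter_subset_inter_left _ subset_closure)
  · exact (hR σ).2.1.trans (inter_subset_inter_left _ subset_closure)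

end Preperfect

section Selection

variable {α : Type*} {P : ℕ → Set α}

theorem exists_injective_forall_mem (hP : ∀ n, (P n).Infinite) :
    ∃ y : ℕ → α, Injective y ∧ ∀ n, y n ∈ P n := by
  classical
  choose next hnext using fun n (s : Finset α) => (hP n).exists_notMem_finset s
  let used : ℕ → Finset α := fun m => Nat.rec ∅ (fun n s => insert (next n s) s) m
  have hused : ∀ m k, next m (used m) ∈ used (m + k + 1) := by
    intro m k
    induction k with
    | zero => exact Finset.mem_insert_self _ _
    | succ k ih => exact Finset.mem_insert_of_mem ih
  refine ⟨fun n => next n (used n), .of_lt_imp_ne fun m m' hm h => ?_, fun n => (hnext n _).1⟩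
  obtain ⟨k, rfl⟩ := Nat.exists_eq_add_of_lt hm
  exact (hnext (m + k + 1) _).2 (h ▸ hused m k)

theorem exists_pairwise_disjoint_finset (hP : ∀ n, (P n).Infinite) :
    ∃ A : ℕ → Finset α, Pairwise (Disjoint on A) ∧ (∀ k, ↑(A k) ⊆ ⋃ n, P n) ∧
      ∀ n k, n ≤ k → (↑(A k) ∩ P n).Nonempty := by
  classical
  obtain ⟨y, hy, hyP⟩ := exists_injective_forall_mem (P := fun m => P m.unpair.2) fun m => hP _
  refine ⟨fun k => (Finset.range (k + 1)).image fun n => y (Nat.pair k n), fun k k' hk => ?_,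
    fun k => ?_, fun n k hnk => ⟨_, Finset.mem_image_of_mem _ (by simpa [Nat.lt_succ_iff]),
      by simpa using hyP (Nat.pair k n)⟩⟩
  · simp only [onFun, Finset.disjoint_left, Finset.mem_image, not_exists, not_and]
    rintro _ ⟨n, -, rfl⟩ n' - h
    exact hk (Nat.pair_eq_pair.1 (hy h)).1.symm
  · simp only [Finset.coe_image, image_subset_iff]
    exact fun n _ => mem_iUnion_of_mem n (by simpa using hyP (Nat.pair k n))

end Selection

section PiNetwork

variable {X : Type*} [TopologicalSpace X]

structure IsPiNetwork {ι : Type*} (C : Set X) (P : ι → Set X) : Prop where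
  subset : ∀ i, P i ⊆ C
  exists_subset_of_isOpen : ∀ U, IsOpen U → (U ∩ C).Nonempty → ∃ i, P i ⊆ U

theorem IsPiNetwork.preimage {ι Y : Type*} [TopologicalSpace Y] {e : X → Y} (he : IsInducing e)
    {C : Set Y} {P : ι → Set Y} (hP : IsPiNetwork C P) :
    IsPiNetwork (e ⁻¹' C) fun i => e ⁻¹' P i where
  subset i := preimage_mono (hP.subset i)
  exists_subset_of_isOpen U hU hUC := by
    obtain ⟨Ω, hΩ, rfl⟩ := he.isOpen_iff.1 hU
    obtain ⟨x, hxΩ, hxC⟩ := hUC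
    exact (hP.exists_subset_of_isOpen Ω hΩ ⟨e x, hxΩ, hxC⟩).imp fun i => preimage_mono

theorem Preperfect.exists_isClosed_isPiNetwork [CompactSpace X] [T2Space X] {S : Set X}
    (hS : Preperfect S) (hSne : S.Nonempty) {G : ℕ → Set X} (hG : ∀ n, IsOpen (G n))
    (hSG : ∀ n, S ⊆ G n) :
    ∃ C, IsClosed C ∧ C ⊆ ⋂ n, G n ∧
      ∃ P : ℕ → Set X, (∀ n, (P n).Infinite) ∧ IsPiNetwork C P := by
  obtain ⟨F, hFc, hFne, hcons, hdisj⟩ := hS.exists_isClosed_binaryTree hSne hG hSG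
  have hcons' : ∀ b σ, F (b :: σ) ⊆ F σ := fun b σ => (hcons b σ).trans inter_subset_left
  obtain ⟨C, hC⟩ := exists_minimal_isClosedHittingSet hFc hFne
  obtain ⟨s, hs⟩ := exists_surjective_nat (List Bool)
  refine ⟨C, hC.prop.1, subset_iInter fun n => (hC.subset_treeLevel hFc hcons' (n + 1)).trans
      (treeLevel_succ_subset (fun b σ => (hcons b σ).trans inter_subset_right) n),
    fun n => C ∩ F (s n), fun n => infinite_inter_of_forall_inter_nonempty hcons' hdisj hC.prop.2 _,
    fun n => inter_subset_left, fun U hU hUC => ?_⟩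
  obtain ⟨σ, hσ⟩ := hC.exists_inter_subset_of_isOpen hU hUC
  obtain ⟨n, rfl⟩ := hs σ
  exact ⟨n, hσ⟩

def OpenSupersetsHaveFrequentPoint (A : ℕ → Set X) : Prop :=
  ∀ V : ℕ → Set X, (∀ k, IsOpen (V k)) → (∃ᶠ k in atTop, A k ⊆ V k) → ∃ x, ∃ᶠ k in atTop, x ∈ V k

theorem IsPiNetwork.openSupersetsHaveFrequentPoint [T2Space X] {C : Set X} (hC : IsCompact C)
    {P : ℕ → Set X} (hP : IsPiNetwork C P) {A : ℕ → Set X} (hAC : ∀ k, A k ⊆ C)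
    (hAP : ∀ n k, n ≤ k → (A k ∩ P n).Nonempty) : OpenSupersetsHaveFrequentPoint A := by
  intro V hV hAV
  have : CompactSpace C := isCompact_iff_compactSpace.1 hC
  have : Nonempty C := (hAP 0 0 le_rfl).elim fun a ha => ⟨⟨a, hAC 0 ha.1⟩⟩
  have hdense : ∀ N, Dense (⋃ k ≥ N, ((↑) : C → X) ⁻¹' V k) := by
    refine fun N => dense_iff_inter_open.2 fun U hU ⟨x, hxU⟩ => ?_
    obtain ⟨Ω, hΩ, rfl⟩ := isOpen_induced_iff.1 hU
    obtain ⟨n, hn⟩ := hP.exists_subset_of_isOpen Ω hΩ ⟨x, hxU, x.2⟩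
    obtain ⟨k, hAk, hk⟩ := (hAV.and_eventually (eventually_ge_atTop (max N n))).exists
    obtain ⟨a, haA, haP⟩ := hAP n k (le_of_max_le_right hk)
    exact ⟨⟨a, hAC k haA⟩, hn haP, mem_biUnion (le_of_max_le_left hk) (hAk haA)⟩
  obtain ⟨z, hz⟩ := (dense_iInter_of_isOpen (fun N => isOpen_biUnion fun k _ =>
    (hV k).preimage continuous_subtype_val) hdense).nonempty
  refine ⟨z, frequently_atTop.2 fun N => ?_⟩
  obtain ⟨k, hk, hzk⟩ := mem_iUnion₂.1 (mem_iInter.1 hz N)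
  exact ⟨k, hk, hzk⟩

theorem IsPiNetwork.exists_finset_openSupersetsHaveFrequentPoint [T2Space X] {C : Set X}
    (hC : IsCompact C) {P : ℕ → Set X} (hP : IsPiNetwork C P) (hinf : ∀ n, (P n).Infinite) :
    ∃ A : ℕ → Finset X, (∀ k, (A k).Nonempty) ∧ Pairwise (Disjoint on A) ∧
      OpenSupersetsHaveFrequentPoint fun k => (A k : Set X) := by
  obtain ⟨A, hAd, hAP, hA⟩ := exists_pairwise_disjoint_finset hinf
  refine ⟨A, fun k => Finset.coe_nonempty.1 ((hA 0 k k.zero_le).mono inter_subset_left), hAd,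
    hP.openSupersetsHaveFrequentPoint hC (fun k => (hAP k).trans (iUnion_subset hP.subset)) hA⟩

end PiNetwork

theorem Pairwise.finite_setOf_inter_nonempty {α ι : Type*} {A : ι → Set α}
    (hA : Pairwise (Disjoint on A)) {I : Set α} (hI : I.Finite) :
    {i | (A i ∩ I).Nonempty}.Finite := by
  refine (hI.biUnion (t := fun a => {i | a ∈ A i}) fun a _ => ?_).subset
    fun i ⟨a, haA, haI⟩ => mem_biUnion haI haA
  exact Subsingleton.finite fun i hi j hj => hA.eq (not_disjoint_iff.2 ⟨a, hi, hj⟩)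

theorem CompletelyRegularSpace.exists_continuous_eqOn_one_zero {X : Type*} [TopologicalSpace X]
    [CompletelyRegularSpace X] {A I : Set X} (hA : A.Finite) (hI : IsClosed I)
    (hAI : Disjoint A I) : ∃ g : C(X, ℝ), EqOn g 1 A ∧ EqOn g 0 I := by
  classical
  choose φ hφ hφa hφI using fun a : A =>
    CompletelyRegularSpace.completely_regular a.1 I hI (disjoint_left.1 hAI a.2)
  have := hA.fintype
  refine ⟨⟨fun x => 1 - ∏ a : A, (φ a x : ℝ), continuous_const.sub <|
    continuous_finsetProd _ fun a _ => continuous_subtype_val.comp (hφ a)⟩, fun x hx => ?_,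
    fun x hx => ?_⟩
  · have hx0 : (φ ⟨x, hx⟩ x : ℝ) = 0 := by simp [hφa ⟨x, hx⟩]
    show 1 - ∏ a : A, (φ a x : ℝ) = 1
    rw [Finset.prod_eq_zero (f := fun a : A => (φ a x : ℝ)) (Finset.mem_univ _) hx0, sub_zero]
  · simp [fun a => hφI a hx]

section FunctionSpace

variable {X : Type*} [TopologicalSpace X]

def Cp.equiv (X : Type*) [TopologicalSpace X] : Cp X ≃ C(X, ℝ) := Equiv.refl _

theorem Cp.continuous_eval (a : X) : Continuous fun f : Cp X => Cp.equiv X f a :=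
  (continuous_apply a).comp continuous_induced_dom

theorem Cp.exists_finite_of_mem_nhds {f : Cp X} {U : Set (Cp X)} (hU : U ∈ 𝓝 f) :
    ∃ I : Set X, I.Finite ∧ ∀ g, (∀ a ∈ I, Cp.equiv X g a = Cp.equiv X f a) → g ∈ U := by
  rw [nhds_induced, mem_comap] at hU
  obtain ⟨t, ht, htU⟩ := hU
  rw [nhds_pi, Filter.mem_pi] at ht
  obtain ⟨I, hI, u, hu, hIu⟩ := ht
  refine ⟨I, hI, fun g hg => htU (hIu fun a ha => ?_)⟩
  change Cp.equiv X g a ∈ u a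
  rw [hg a ha]
  exact mem_of_mem_nhds (hu a)

noncomputable def Cp.infExcess (A : Finset X) (hA : A.Nonempty) (c : ℝ) : C(Cp X, ℝ) where
  toFun f := max 0 (A.inf' hA (Cp.equiv X f) - c)
  continuous_toFun := continuous_const.max <|
    (Continuous.finset_inf'_apply hA fun a _ => Cp.continuous_eval a).sub continuous_const

theorem Cp.infExcess_apply (A : Finset X) (hA : A.Nonempty) (c : ℝ) (f : Cp X) :
    Cp.infExcess A hA c f = max 0 (A.inf' hA (Cp.equiv X f) - c) := rfl

theorem Cp.tendsto_infExcess_zero {A : ℕ → Finset X} (hA : ∀ k, (A k).Nonempty)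
    (hAV : OpenSupersetsHaveFrequentPoint fun k => (A k : Set X)) :
    Tendsto (fun k : ℕ => Cp.infExcess (A k) (hA k) k) atTop (𝓝 0) := by
  rw [ContinuousMap.tendsto_iff_forall_isCompact_tendstoUniformlyOn]
  refine fun 𝒞 h𝒞 => Metric.tendstoUniformlyOn_iff.2 fun ε hε => ?_
  by_contra hcon
  set V : ℕ → Set X := fun k => ⋃ f ∈ 𝒞, {a | (k : ℝ) < Cp.equiv X f a}
  have hV : ∀ k, IsOpen (V k) := fun k =>
    isOpen_biUnion fun f _ => isOpen_lt continuous_const (Cp.equiv X f).continuous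
  have hAV' : ∃ᶠ k in atTop, ↑(A k) ⊆ V k := (not_eventually.1 hcon).mono fun k hk => by
    obtain ⟨f, hf, hfk⟩ := not_forall₂.1 hk
    have hεk : ε ≤ (A k).inf' (hA k) (Cp.equiv X f) - k := by
      simp only [ContinuousMap.zero_apply, dist_zero_left, Real.norm_eq_abs, not_lt,
        Cp.infExcess_apply] at hfk
      rw [abs_of_nonneg (le_max_left 0 _), le_max_iff] at hfk
      exact hfk.resolve_left hε.not_ge
    exact fun a ha => mem_biUnion hf <| show (k : ℝ) < Cp.equiv X f a by
      linarith [Finset.inf'_le (Cp.equiv X f) ha]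
  obtain ⟨x, hx⟩ := hAV V hV hAV'
  obtain ⟨M, hM⟩ := (h𝒞.image (Cp.continuous_eval x)).bddAbove
  obtain ⟨k, hk, hkM⟩ := (hx.and_eventually (eventually_gt_atTop ⌈M⌉₊)).exists
  obtain ⟨f, hf, hfx⟩ := mem_iUnion₂.1 hk
  have hfM : Cp.equiv X f x ≤ M := hM (mem_image_of_mem _ hf)
  have hMk : M < k := (Nat.le_ceil M).trans_lt (Nat.cast_lt.2 hkM)
  exact (hfx.trans_le hfM).not_gt hMk

theorem Cp.not_evenlyContinuousOn_infExcess [T1Space X] [CompletelyRegularSpace X]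
    {A : ℕ → Finset X} (hA : ∀ k, (A k).Nonempty) (hAd : Pairwise (Disjoint on A)) :
    ¬ EvenlyContinuousOn (Cp X) (insert 0 (range fun k : ℕ => Cp.infExcess (A k) (hA k) k)) := by
  intro h
  obtain ⟨U, hU, h0U, W, -, h0W, hUW⟩ :=
    h ((Cp.equiv X).symm 0) 0 (mem_insert _ _) (Iio 1) isOpen_Iio (by simp)
  obtain ⟨I, hI, hIU⟩ := Cp.exists_finite_of_mem_nhds (hU.mem_nhds h0U)
  have hAd' : Pairwise (Disjoint on fun k => (A k : Set X)) := fun k k' hk =>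
    Finset.disjoint_coe.2 (hAd hk)
  obtain ⟨k, hk⟩ := (hAd'.finite_setOf_inter_nonempty hI).infinite_compl.nonempty
  obtain ⟨g, hgA, hgI⟩ := CompletelyRegularSpace.exists_continuous_eqOn_one_zero
    (A k).finite_toSet hI.isClosed (disjoint_iff_inter_eq_empty.2 (not_nonempty_iff_eq_empty.1 hk))
  set g' : Cp X := (Cp.equiv X).symm (((k : ℝ) + 1) • g)
  have hg'U : g' ∈ U := hIU g' fun a ha => by simp [g', hgI ha]
  have h0 : Cp.infExcess (A k) (hA k) k ((Cp.equiv X).symm 0) ∈ W := by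
    simpa [Cp.infExcess_apply] using h0W
  have hg' : ¬ Cp.infExcess (A k) (hA k) k g' < 1 := by
    rw [Cp.infExcess_apply, not_lt, le_max_iff]
    refine Or.inr (le_sub_iff_add_le'.2 (Finset.le_inf' _ _ fun a ha => ?_))
    simp [g', hgA ha]
  exact hg' (hUW _ (mem_insert_of_mem _ ⟨k, rfl⟩) h0 g' hg'U)

theorem Cp.not_ascoliSpace [T1Space X] [CompletelyRegularSpace X] {A : ℕ → Finset X}
    (hA : ∀ k, (A k).Nonempty) (hAd : Pairwise (Disjoint on A))
    (hAV : OpenSupersetsHaveFrequentPoint fun k => (A k : Set X)) : ¬ AscoliSpace (Cp X) :=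
  fun h => Cp.not_evenlyContinuousOn_infExcess hA hAd <|
    h _ (Cp.tendsto_infExcess_zero hA hAV).isCompact_insert_range

end FunctionSpace

/-- If `X` is Čech-complete and `C_p(X)` is Ascoli, then `X` is scattered. -/
theorem scattered_of_cechComplete_of_ascoli_Cp (X : Type u) [TopologicalSpace X]
    (hX : CechComplete X) (h : AscoliSpace (Cp X)) : Scattered X := by
  obtain ⟨hcr, ht2, K, tK, e, hK, hKt2, he, -, G, hG, hGe⟩ := hX
  by_contra hsc
  obtain ⟨S, hSne, hS⟩ := exists_preperfect_of_not_scattered hsc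
  have hSG : ∀ n, e '' S ⊆ G n := fun n =>
    (image_subset_range e S).trans (hGe ▸ iInter_subset G n)
  obtain ⟨C, hC, hCG, P, hPinf, hP⟩ :=
    (hS.image he.continuous he.injective).exists_isClosed_isPiNetwork (hSne.image e) hG hSG
  have hCe : C ⊆ range e := hGe ▸ hCG
  obtain ⟨A, hAne, hAd, hAV⟩ :=
    (hP.preimage he.isInducing).exists_finset_openSupersetsHaveFrequentPoint
      (he.isInducing.isCompact_preimage' hC.isCompact hCe)
      fun n => (hPinf n).preimage ((hP.subset n).trans hCe)
  exact Cp.not_ascoliSpace hAne hAd hAV h
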